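/- arXiv:2303.09345 — 7 statements merged into one kernel-verified Lean document; each statement's English description precedes it below -/
import Mathlib

section
/- (Seress Lemma for the Monster fusion law.) Let F be a field of characteristic ≠ 2, α, β ∈ F \ {0,1} with α ≠ β, A a commutative nonassociative F-algebra, and a a primitive M(α,β)-axis of A. Then for every x ∈ A and every u ∈ A₀(a) + A₁(a), one has a(xu) = (ax)u. -/
/-- The `l`-eigenspace `A_l(a)` of the left multiplication operator `ad_a : v ↦ a * v`. -/
def eig (F : Type*) {A : Type*} [Field F] [NonUnitalNonAssocCommRing A]
    [Module F A] [SMulCommClass F A A] (a : A) (l : F) : Submodule F A where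
  carrier := {v | a * v = l • v}
  add_mem' := by
    intro x y hx hy
    simp only [Set.mem_setOf_eq] at *
    rw [mul_add, hx, hy, smul_add]
  zero_mem' := by simp
  smul_mem' := by
    intro c x hx
    simp only [Set.mem_setOf_eq] at *
    rw [mul_smul_comm, hx, smul_comm]

/-- `a` is a primitive axis for the Monster fusion law `M(α,β)`:  it is an idempotent,
the eigenspaces `A₁(a), A₀(a), A_α(a), A_β(a)` of `ad_a` decompose `A`
(they are automatically independent when `1, 0, α, β` are pairwise distinct),
`A₁(a) = F·a`, and products of eigenspaces obey the Monster fusion law `M(α,β)`. -/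
structure IsMonsterAxis {F : Type*} [Field F] {A : Type*} [NonUnitalNonAssocCommRing A]
    [Module F A] [SMulCommClass F A A] [IsScalarTower F A A]
    (α β : F) (a : A) : Prop where
  idem : a * a = a
  semisimple : eig F a 1 ⊔ eig F a 0 ⊔ eig F a α ⊔ eig F a β = ⊤
  primitive : eig F a 1 = Submodule.span F {a}
  mul00 : ∀ u ∈ eig F a 0, ∀ v ∈ eig F a 0, u * v ∈ eig F a 0
  mul0a : ∀ u ∈ eig F a 0, ∀ v ∈ eig F a α, u * v ∈ eig F a α
  mul0b : ∀ u ∈ eig F a 0, ∀ v ∈ eig F a β, u * v ∈ eig F a β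
  mulaa : ∀ u ∈ eig F a α, ∀ v ∈ eig F a α, u * v ∈ eig F a 1 ⊔ eig F a 0
  mulab : ∀ u ∈ eig F a α, ∀ v ∈ eig F a β, u * v ∈ eig F a β
  mulbb : ∀ u ∈ eig F a β, ∀ v ∈ eig F a β, u * v ∈ eig F a 1 ⊔ eig F a 0 ⊔ eig F a α

/-- **Seress Lemma for the Monster fusion law.**  If `a` is a primitive `M(α,β)`-axis of a
commutative nonassociative algebra `A` over a field `F` of characteristic `≠ 2`
(with `α, β ∉ {0,1}`, `α ≠ β`), then `a` associates with `A₀(a) + A₁(a)`: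
for every `x ∈ A` and `u ∈ A₀(a) + A₁(a)` one has `a(xu) = (ax)u`. -/
theorem seress_lemma
    {F : Type*} [Field F] {A : Type*} [NonUnitalNonAssocCommRing A]
    [Module F A] [SMulCommClass F A A] [IsScalarTower F A A]
    (hchar : (2 : F) ≠ 0) {α β : F}
    (hα0 : α ≠ 0) (hα1 : α ≠ 1) (hβ0 : β ≠ 0) (hβ1 : β ≠ 1) (hαβ : α ≠ β)
    {a : A} (ha : IsMonsterAxis α β a) :
    ∀ x : A, ∀ u ∈ eig F a 0 ⊔ eig F a 1, a * (x * u) = (a * x) * u := by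
  intro x u hu
  obtain ⟨u0, hu0, u1, hu1, rfl⟩ := Submodule.mem_sup.mp hu
  obtain ⟨c, rfl⟩ := Submodule.mem_span_singleton.mp (ha.primitive ▸ hu1)
  have hu0' : a * u0 = 0 := by
    have := hu0
    simp only [eig, Submodule.mem_mk, AddSubmonoid.mem_mk, AddSubsemigroup.mem_mk,
      Set.mem_setOf_eq, zero_smul] at this
    exact this
  have h1 : a * (x * (c • a)) = (a * x) * (c • a) := by
    rw [mul_smul_comm, mul_smul_comm, mul_smul_comm, mul_comm x a, mul_comm (a * x) a]
  have h0 : a * (x * u0) = (a * x) * u0 := by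
    let f : A →ₗ[F] A := (LinearMap.mulRight F u0).comp (LinearMap.mulLeft F a)
    let g : A →ₗ[F] A := (LinearMap.mulLeft F a).comp (LinearMap.mulRight F u0)
    have key : ∀ y : A, y ∈ LinearMap.eqLocus f g := by
      intro y
      have htop : (⊤ : Submodule F A) ≤ LinearMap.eqLocus f g := by
        rw [← ha.semisimple]
        refine sup_le (sup_le (sup_le ?_ ?_) ?_) ?_
        · rw [ha.primitive, Submodule.span_singleton_le_iff_mem]
          show f a = g a
          simp only [f, g, LinearMap.comp_apply, LinearMap.mulLeft_apply,
            LinearMap.mulRight_apply]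
          rw [ha.idem, hu0', mul_zero]
        · intro y hy
          have hy' : a * y = 0 := by simpa [eig] using hy
          show f y = g y
          have h00 : a * (y * u0) = 0 := by
            have := ha.mul00 y hy u0 hu0
            simpa [eig] using this
          simp only [f, g, LinearMap.comp_apply, LinearMap.mulLeft_apply,
            LinearMap.mulRight_apply]
          rw [hy', zero_mul, h00]
        · intro y hy
          have hy' : a * y = α • y := hy
          show f y = g y
          have h0a : a * (y * u0) = α • (y * u0) := by
            have := ha.mul0a u0 hu0 y hy
            rw [mul_comm u0 y] at this
            exact this
          simp only [f, g, LinearMap.comp_apply, LinearMap.mulLeft_apply,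
            LinearMap.mulRight_apply]
          rw [hy', smul_mul_assoc, h0a]
        · intro y hy
          have hy' : a * y = β • y := hy
          show f y = g y
          have h0b : a * (y * u0) = β • (y * u0) := by
            have := ha.mul0b u0 hu0 y hy
            rw [mul_comm u0 y] at this
            exact this
          simp only [f, g, LinearMap.comp_apply, LinearMap.mulLeft_apply,
            LinearMap.mulRight_apply]
          rw [hy', smul_mul_assoc, h0b]
      exact htop Submodule.mem_top
    have := key x
    simpa [f, g, LinearMap.eqLocus, mul_comm] using this.symm
  rw [mul_add, mul_add, mul_add, h0, h1]
end

section
/- In the skew X'(1+2) configuration, the following multiplication formulas hold: a·σ = (α−β)σ + δ·a + (β(α−β)/2)(b + c), b·σ = (α−β)σ + δᶠ·b + β(α−β)·a, and c·σ = (α−β)σ + δᶠ·c + β(α−β)·a. -/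
theorem mem_eig_iff {F : Type*} [Field F] {A : Type*} [NonUnitalNonAssocCommRing A]
    [Module F A] [SMulCommClass F A A] {a v : A} {l : F} :
    v ∈ eig F a l ↔ a * v = l • v := Iff.rfl

theorem eig_disjoint {F : Type*} [Field F] {A : Type*} [NonUnitalNonAssocCommRing A]
    [Module F A] [SMulCommClass F A A] [IsScalarTower F A A] (a : A) {α β : F}
    (h1 : (1 : F) ≠ β) (h0 : (0 : F) ≠ β) (hα : α ≠ β) :
    Disjoint (eig F a 1 ⊔ eig F a 0 ⊔ eig F a α) (eig F a β) := by
  have hf : ∀ l : F, eig F a l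
      = Module.End.eigenspace (LinearMap.mulLeft F a : Module.End F A) l := by
    intro l; ext v
    rw [Module.End.mem_eigenspace_iff]
    rfl
  have hind := Module.End.eigenspaces_iSupIndep (LinearMap.mulLeft F a : Module.End F A)
  have hd := hind β
  rw [hf 1, hf 0, hf α, hf β]
  refine Disjoint.symm (hd.mono_right ?_)
  refine sup_le (sup_le ?_ ?_) ?_
  · exact le_iSup_of_le 1 (le_iSup_of_le h1 le_rfl)
  · exact le_iSup_of_le 0 (le_iSup_of_le h0 le_rfl)
  · exact le_iSup_of_le α (le_iSup_of_le hα le_rfl)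

/-- **Multiplication by `σ` in the skew `X'(1+2)` configuration.**
With `σ := ab - β(a+b)`, `δ := (1-α)λ₁ + β(α-β-1)` and `δᶠ := (1-α)λ₁ᶠ + β(α-β-1)`:
`aσ = (α-β)σ + δ a + (β(α-β)/2)(b+c)`, `bσ = (α-β)σ + δᶠ b + β(α-β) a`, and
`cσ = (α-β)σ + δᶠ c + β(α-β) a`. -/
theorem skew_sigma_mult
    {F : Type*} [Field F] {A : Type*} [NonUnitalNonAssocCommRing A]
    [Module F A] [SMulCommClass F A A] [IsScalarTower F A A]
    (hchar : (2 : F) ≠ 0) {α β : F}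
    (hα0 : α ≠ 0) (hα1 : α ≠ 1) (hβ0 : β ≠ 0) (hβ1 : β ≠ 1) (hαβ : α ≠ β)
    {a b c : A}
    (ha : IsMonsterAxis α β a) (hb : IsMonsterAxis α β b)
    (hJb : eig F b β = ⊥)
    (τ : A →ₗ[F] A)
    (hτfix : ∀ v ∈ eig F a 1 ⊔ eig F a 0 ⊔ eig F a α, τ v = v)
    (hτneg : ∀ v ∈ eig F a β, τ v = -v)
    (hc : c = τ b) (hskew : c ≠ b)
    (hgen : NonUnitalAlgebra.adjoin F {a, b} = ⊤)
    {σ : A} (hσ : σ = a * b - β • (a + b))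
    {l₁ l₁f : F}
    (hl₁ : b - l₁ • a ∈ eig F a 0 ⊔ eig F a α ⊔ eig F a β)
    (hl₁f : a - l₁f • b ∈ eig F b 0 ⊔ eig F b α)
    :
    a * σ = (α - β) • σ + ((1 - α) * l₁ + β * (α - β - 1)) • a
        + (β * (α - β) / 2) • (b + c) ∧
    b * σ = (α - β) • σ + ((1 - α) * l₁f + β * (α - β - 1)) • b + (β * (α - β)) • a ∧
    c * σ = (α - β) • σ + ((1 - α) * l₁f + β * (α - β - 1)) • c + (β * (α - β)) • a := by
  -- decompose b in the eigenspaces of a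
  obtain ⟨w, hw, uβ, huβ, hw'⟩ := Submodule.mem_sup.mp hl₁
  obtain ⟨u₀, hu₀, uα, huα, hw''⟩ := Submodule.mem_sup.mp hw
  have hb' : b = l₁ • a + u₀ + uα + uβ := by
    rw [← hw''] at hw'
    linear_combination (norm := module) -hw'
  -- decompose a in the eigenspaces of b
  obtain ⟨v₀, hv₀, vα, hvα, hv'⟩ := Submodule.mem_sup.mp hl₁f
  have ha' : a = l₁f • b + v₀ + vα := by
    linear_combination (norm := module) -hv'
  -- basic product facts
  have haE : a ∈ eig F a 1 := by rw [mem_eig_iff, one_smul]; exact ha.idem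
  have hau₀ : a * u₀ = 0 := by rw [mem_eig_iff.mp hu₀, zero_smul]
  have hauα : a * uα = α • uα := mem_eig_iff.mp huα
  have hauβ : a * uβ = β • uβ := mem_eig_iff.mp huβ
  have hbE : b ∈ eig F b 1 := by rw [mem_eig_iff, one_smul]; exact hb.idem
  have hbv₀ : b * v₀ = 0 := by rw [mem_eig_iff.mp hv₀, zero_smul]
  have hbvα : b * vα = α • vα := mem_eig_iff.mp hvα
  have hv₀b : v₀ * b = 0 := by rw [mul_comm]; exact hbv₀
  have hvαb : vα * b = α • vα := by rw [mul_comm]; exact hbvα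
  -- c in terms of the decomposition
  have hc' : c = l₁ • a + u₀ + uα - uβ := by
    rw [hc, hb', map_add, map_add, map_add, map_smul,
      hτfix a (Submodule.mem_sup_left (Submodule.mem_sup_left haE)),
      hτfix u₀ (Submodule.mem_sup_left (Submodule.mem_sup_right hu₀)),
      hτfix uα (Submodule.mem_sup_right huα), hτneg uβ huβ]
    module
  have hc2 : c = b - (2 : F) • uβ := by rw [hc', hb']; module
  -- a * b and a * (a * b)
  have hab : a * b = l₁ • a + α • uα + β • uβ := by
    rw [hb']
    simp only [mul_add, mul_smul_comm, ha.idem, hau₀, hauα, hauβ]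
    all_goals module
  have haab : a * (a * b) = l₁ • a + (α * α) • uα + (β * β) • uβ := by
    rw [hab]
    simp only [mul_add, mul_smul_comm, ha.idem, hau₀, hauα, hauβ, smul_smul]
    all_goals module
  -- b * a and b * (b * a)
  have hba : b * a = l₁f • b + α • vα := by
    rw [ha']
    simp only [mul_add, mul_smul_comm, hb.idem, hbv₀, hbvα]
    all_goals module
  have hbba : b * (b * a) = l₁f • b + (α * α) • vα := by
    rw [hba]
    simp only [mul_add, mul_smul_comm, hb.idem, hbvα, smul_smul]
    all_goals module
  -- first equation
  have eq1 : a * σ = (α - β) • σ + ((1 - α) * l₁ + β * (α - β - 1)) • a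
      + (β * (α - β) / 2) • (b + c) := by
    rw [hσ, mul_sub, mul_smul_comm, mul_add, ha.idem, haab, hab, hb', hc']
    match_scalars <;> field_simp <;> ring
  -- second equation
  have eq2 : b * σ = (α - β) • σ + ((1 - α) * l₁f + β * (α - β - 1)) • b
      + (β * (α - β)) • a := by
    rw [hσ, mul_comm a b, mul_sub, mul_smul_comm, mul_add, hb.idem, hbba, hba, ha']
    match_scalars <;> ring
  refine ⟨eq1, eq2, ?_⟩
  -- the "even part" E = A₁ ⊕ A₀ ⊕ A_α
  set E : Submodule F A := eig F a 1 ⊔ eig F a 0 ⊔ eig F a α with hEdef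
  have h1E : eig F a 1 ≤ E := le_sup_left.trans le_sup_left
  have h0E : eig F a 0 ≤ E := le_sup_right.trans le_sup_left
  have hαE : eig F a α ≤ E := le_sup_right
  -- E is closed under multiplication
  have hEmulE : ∀ x ∈ E, ∀ y ∈ E, x * y ∈ E := by
    intro x hx y hy
    obtain ⟨p', hp', r, hr, hx'⟩ := Submodule.mem_sup.mp hx
    obtain ⟨p, hp, q, hq, hx''⟩ := Submodule.mem_sup.mp hp'
    obtain ⟨s, rfl⟩ := Submodule.mem_span_singleton.mp (ha.primitive ▸ hp)
    obtain ⟨p₂', hp₂', r', hr', hy'⟩ := Submodule.mem_sup.mp hy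
    obtain ⟨p₂, hp₂, q', hq', hy''⟩ := Submodule.mem_sup.mp hp₂'
    obtain ⟨s', rfl⟩ := Submodule.mem_span_singleton.mp (ha.primitive ▸ hp₂)
    have hxeq : x = s • a + q + r := by rw [← hx', ← hx'']
    have hyeq : y = s' • a + q' + r' := by rw [← hy', ← hy'']
    have h11 : (s • a) * (s' • a) ∈ E := by
      rw [smul_mul_assoc, mul_smul_comm, ha.idem]
      exact Submodule.smul_mem _ _ (Submodule.smul_mem _ _ (h1E haE))
    have h10 : (s • a) * q' ∈ E := by
      rw [smul_mul_assoc, mem_eig_iff.mp hq', zero_smul, smul_zero]; exact zero_mem E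
    have h1a : (s • a) * r' ∈ E := by
      rw [smul_mul_assoc, mem_eig_iff.mp hr']
      exact Submodule.smul_mem _ _ (Submodule.smul_mem _ _ (hαE hr'))
    have h01 : q * (s' • a) ∈ E := by
      rw [mul_smul_comm, mul_comm, mem_eig_iff.mp hq, zero_smul, smul_zero]; exact zero_mem E
    have h00 : q * q' ∈ E := h0E (ha.mul00 q hq q' hq')
    have h0a : q * r' ∈ E := hαE (ha.mul0a q hq r' hr')
    have ha1 : r * (s' • a) ∈ E := by
      rw [mul_smul_comm, mul_comm, mem_eig_iff.mp hr]
      exact Submodule.smul_mem _ _ (Submodule.smul_mem _ _ (hαE hr))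
    have ha0 : r * q' ∈ E := by rw [mul_comm]; exact hαE (ha.mul0a q' hq' r hr)
    have hsupE : eig F a 1 ⊔ eig F a 0 ≤ E := le_sup_left
    have haa : r * r' ∈ E := hsupE (ha.mulaa r hr r' hr')
    rw [hxeq, hyeq]
    simp only [add_mul, mul_add]
    repeat' apply add_mem
    all_goals first
      | exact h11 | exact h10 | exact h1a | exact h01 | exact h00 | exact h0a
      | exact ha1 | exact ha0 | exact haa
  -- E · A_β ⊆ A_β
  have hEmulβ : ∀ x ∈ E, ∀ y ∈ eig F a β, x * y ∈ eig F a β := by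
    intro x hx y hy
    obtain ⟨p', hp', r, hr, hx'⟩ := Submodule.mem_sup.mp hx
    obtain ⟨p, hp, q, hq, hx''⟩ := Submodule.mem_sup.mp hp'
    obtain ⟨s, rfl⟩ := Submodule.mem_span_singleton.mp (ha.primitive ▸ hp)
    have hxeq : x = s • a + q + r := by rw [← hx', ← hx'']
    have h1b : (s • a) * y ∈ eig F a β := by
      rw [smul_mul_assoc, mem_eig_iff.mp hy]
      exact Submodule.smul_mem _ _ (Submodule.smul_mem _ _ hy)
    rw [hxeq]
    simp only [add_mul]
    exact add_mem (add_mem h1b (ha.mul0b q hq y hy)) (ha.mulab r hr y hy)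
  -- σ lies in E
  have hσeq : σ = ((1 - β) * l₁ - β) • a + (-β) • u₀ + (α - β) • uα := by
    rw [hσ, hab, hb']
    match_scalars <;> ring
  have hσE : σ ∈ E := by
    rw [hσeq]
    exact add_mem (add_mem (Submodule.smul_mem _ _ (h1E haE))
      (Submodule.smul_mem _ _ (h0E hu₀))) (Submodule.smul_mem _ _ (hαE huα))
  have heE : l₁ • a + u₀ + uα ∈ E :=
    add_mem (add_mem (Submodule.smul_mem _ _ (h1E haE)) (h0E hu₀)) (hαE huα)
  have heσE : (l₁ • a + u₀ + uα) * σ ∈ E := hEmulE _ heE σ hσE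
  have huβσ_mem : uβ * σ ∈ eig F a β := by
    rw [mul_comm]; exact hEmulβ σ hσE uβ huβ
  -- split eq2 into even and odd parts
  have hsplit : (l₁ • a + u₀ + uα) * σ + uβ * σ
      = (α - β) • σ + ((1 - α) * l₁f + β * (α - β - 1)) • (l₁ • a + u₀ + uα)
        + ((1 - α) * l₁f + β * (α - β - 1)) • uβ + (β * (α - β)) • a := by
    have h := eq2
    rw [hb', add_mul] at h
    linear_combination (norm := module) h
  have hx : uβ * σ - ((1 - α) * l₁f + β * (α - β - 1)) • uβ
      = ((α - β) • σ + ((1 - α) * l₁f + β * (α - β - 1)) • (l₁ • a + u₀ + uα)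
        + (β * (α - β)) • a) - (l₁ • a + u₀ + uα) * σ := by
    linear_combination (norm := module) hsplit
  have hxE : uβ * σ - ((1 - α) * l₁f + β * (α - β - 1)) • uβ ∈ E := by
    rw [hx]
    exact sub_mem (add_mem (add_mem (Submodule.smul_mem _ _ hσE)
      (Submodule.smul_mem _ _ heE)) (Submodule.smul_mem _ _ (h1E haE))) heσE
  have hxβ : uβ * σ - ((1 - α) * l₁f + β * (α - β - 1)) • uβ ∈ eig F a β :=
    sub_mem huβσ_mem (Submodule.smul_mem _ _ huβ)
  have hdisj := eig_disjoint a (α := α) (Ne.symm hβ1) (Ne.symm hβ0) hαβ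
  have hzero : uβ * σ - ((1 - α) * l₁f + β * (α - β - 1)) • uβ = 0 :=
    (Submodule.disjoint_def.mp hdisj) _ hxE hxβ
  have huβσ : uβ * σ = ((1 - α) * l₁f + β * (α - β - 1)) • uβ := by
    linear_combination (norm := module) hzero
  rw [hc2, sub_mul, smul_mul_assoc, eq2, huβσ]
  module
end

section
/- In the skew X'(1+2) configuration, A is linearly spanned by {a, b, c, σ}; in particular dim_F A ≤ 4. -/
/-!
Decompose `b = λa + u + w + z` into eigenvectors of `ad_a`. Since `ad_a (ad_a - α) (ad_a - β)`
maps `A` into `F a`, the span of `a, b, ab, a(ab)` is `ad_a`-invariant; an `ad_a`-invariant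
subspace contains the eigencomponents of its elements, so this span is `V = ⟨a, u, w, z⟩`.
As `A_β(b) = 0`, `a = νb + p + q` has no `β`-part, and idempotence of `a` forces
`2pq = (1 - 2να)q`; this makes `V` invariant under `ad_b` too. Projecting `bu, bw, bz ∈ V` onto
the eigenspaces of `a` (the fusion law tells which product lands where) puts all products of
`u, w, z` in `V`, so `V` is a subalgebra containing `a` and `b`, i.e. `V = A`. Finally
`c = τ_a(b) = λa + u + w - z`, and `a, b, c, σ` recover `z`, `u + w` and `w`.
-/

open Submodule

section LinearAlgebra

variable {F M : Type*} [Field F] [AddCommGroup M] [Module F M]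

theorem eigencomponent_mem_of_mapsTo {f : Module.End F M} {U : Submodule F M}
    (hU : ∀ x ∈ U, f x ∈ U) {μ₁ μ₂ μ₃ μ₄ : F} (h₁ : μ₁ ≠ μ₄) (h₂ : μ₂ ≠ μ₄) (h₃ : μ₃ ≠ μ₄)
    {x₁ x₂ x₃ x₄ : M} (hx₁ : f x₁ = μ₁ • x₁) (hx₂ : f x₂ = μ₂ • x₂) (hx₃ : f x₃ = μ₃ • x₃)
    (hx₄ : f x₄ = μ₄ • x₄) (hx : x₁ + x₂ + x₃ + x₄ ∈ U) : x₄ ∈ U := by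
  set x := x₁ + x₂ + x₃ + x₄
  have hfx := hU _ hx
  have hffx := hU _ hfx
  have key : ((μ₄ - μ₁) * (μ₄ - μ₂) * (μ₄ - μ₃)) • x₄ = f (f (f x)) - (μ₁ + μ₂ + μ₃) • f (f x)
      + (μ₁ * μ₂ + μ₁ * μ₃ + μ₂ * μ₃) • f x - (μ₁ * μ₂ * μ₃) • x := by
    simp only [x, map_add, map_smul, hx₁, hx₂, hx₃, hx₄]
    module
  rw [← smul_mem_iff _ (mul_ne_zero (mul_ne_zero (sub_ne_zero.2 h₁.symm) (sub_ne_zero.2 h₂.symm))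
    (sub_ne_zero.2 h₃.symm)), key]
  exact sub_mem (add_mem (sub_mem (hU _ hffx) (smul_mem _ _ hffx)) (smul_mem _ _ hfx))
    (smul_mem _ _ hx)

theorem finrank_le_four_of_span_eq_top {a b c d : M} (h : span F {a, b, c, d} = ⊤) :
    Module.finrank F M ≤ 4 := by
  classical
  have := finrank_span_finset_le_card (R := F) ({a, b, c, d} : Finset M)
  rw [Set.finrank, Finset.coe_insert, Finset.coe_insert, Finset.coe_insert, Finset.coe_singleton,
    h, finrank_top] at this
  exact this.trans Finset.card_le_four

theorem span_components_le_span {α β l : F} (h2 : (2 : F) ≠ 0) (hα0 : α ≠ 0)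
    {a b c σ u w z : M} (hb : b = l • a + u + w + z) (hc : c = l • a + u + w - z)
    (hσ : σ = l • a + α • w + β • z - β • (a + b)) :
    span F {a, u, w, z} ≤ span F {a, b, c, σ} := by
  set T := span F {a, b, c, σ}
  have ha : a ∈ T := subset_span (by simp)
  have hbc : b - c ∈ T ∧ b + c ∈ T :=
    ⟨sub_mem (subset_span (by simp)) (subset_span (by simp)),
      add_mem (subset_span (by simp)) (subset_span (by simp))⟩
  have hz : z ∈ T := by
    rw [← smul_mem_iff _ h2, show (2 : F) • z = b - c by rw [hb, hc]; module]
    exact hbc.1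
  have huw : u + w ∈ T := by
    rw [← smul_mem_iff _ h2, show (2 : F) • (u + w) = b + c - (2 * l) • a by rw [hb, hc]; module]
    exact sub_mem hbc.2 (smul_mem _ _ ha)
  have hw : w ∈ T := by
    rw [← smul_mem_iff _ hα0,
      show α • w = σ + β • (u + w) - (l - β - β * l) • a by rw [hσ, hb]; module]
    exact sub_mem (add_mem (subset_span (by simp)) (smul_mem _ _ huw)) (smul_mem _ _ ha)
  have hu : u ∈ T := by
    simpa using sub_mem huw hw
  rw [span_le]
  rintro s (rfl | rfl | rfl | rfl)
  exacts [ha, hu, hw, hz]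

end LinearAlgebra

section Algebra

variable {F A : Type*} [Field F] [NonUnitalNonAssocCommRing A] [Module F A]
  [SMulCommClass F A A]

theorem mem_eig {a v : A} {l : F} : v ∈ eig F a l ↔ a * v = l • v := Iff.rfl

theorem mul_mem_span_of_forall_mem {S : Set A} {g : A} (h : ∀ s ∈ S, g * s ∈ span F S) :
    ∀ x ∈ span F S, g * x ∈ span F S := by
  intro x hx
  induction hx using span_induction with
  | mem s hs => exact h s hs
  | zero => simp
  | add x y _ _ hx hy => rw [mul_add]; exact add_mem hx hy
  | smul c x _ hx => rw [mul_smul_comm]; exact smul_mem _ _ hx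

theorem mul_mem_span_of_forall_mul_mem {S : Set A} (h : ∀ s ∈ S, ∀ t ∈ S, s * t ∈ span F S)
    {x y : A} (hx : x ∈ span F S) (hy : y ∈ span F S) : x * y ∈ span F S := by
  rw [mul_comm]
  refine mul_mem_span_of_forall_mem (fun s hs ↦ ?_) x hx
  rw [mul_comm]
  exact mul_mem_span_of_forall_mem (h s hs) y hy

theorem eig_components_mem {α β : F} (hα0 : α ≠ 0) (hα1 : α ≠ 1) (hβ0 : β ≠ 0) (hβ1 : β ≠ 1)
    (hαβ : α ≠ β) {a : A} {U : Submodule F A} (hU : ∀ x ∈ U, a * x ∈ U)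
    {x₁ x₀ xα xβ : A} (h₁ : x₁ ∈ eig F a 1) (h₀ : x₀ ∈ eig F a 0) (hα : xα ∈ eig F a α)
    (hβ : xβ ∈ eig F a β) (hx : x₁ + x₀ + xα + xβ ∈ U) :
    x₁ ∈ U ∧ x₀ ∈ U ∧ xα ∈ U ∧ xβ ∈ U := by
  have hU' : ∀ x ∈ U, LinearMap.mulLeft F a x ∈ U := hU
  refine ⟨?_, ?_, ?_, eigencomponent_mem_of_mapsTo hU' hβ1.symm hβ0.symm hαβ h₁ h₀ hα hβ hx⟩
  · exact eigencomponent_mem_of_mapsTo hU' zero_ne_one hα1 hβ1 h₀ hα hβ h₁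
      (by convert hx using 1; abel)
  · exact eigencomponent_mem_of_mapsTo hU' one_ne_zero hα0 hβ0 h₁ hα hβ h₀
      (by convert hx using 1; abel)
  · exact eigencomponent_mem_of_mapsTo hU' hα1.symm hα0.symm hαβ.symm h₁ h₀ hβ hα
      (by convert hx using 1; abel)

end Algebra

namespace IsMonsterAxis

variable {F A : Type*} [Field F] [NonUnitalNonAssocCommRing A] [Module F A]
  [SMulCommClass F A A] [IsScalarTower F A A] {α β : F} {a : A}

theorem self_mem_eig_one (ha : IsMonsterAxis α β a) : a ∈ eig F a 1 := by
  rw [mem_eig, ha.idem, one_smul]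

theorem exists_decomp (ha : IsMonsterAxis α β a) (x : A) :
    ∃ (l : F) (x₀ xα xβ : A), x₀ ∈ eig F a 0 ∧ xα ∈ eig F a α ∧ xβ ∈ eig F a β ∧
      x = l • a + x₀ + xα + xβ := by
  have hx : x ∈ eig F a 1 ⊔ eig F a 0 ⊔ eig F a α ⊔ eig F a β := ha.semisimple ▸ mem_top
  obtain ⟨y, hy, xβ, hβ, rfl⟩ := mem_sup.1 hx
  obtain ⟨y', hy', xα, hα, rfl⟩ := mem_sup.1 hy
  obtain ⟨x₁, h₁, x₀, h₀, rfl⟩ := mem_sup.1 hy'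
  rw [ha.primitive, mem_span_singleton] at h₁
  obtain ⟨l, rfl⟩ := h₁
  exact ⟨l, x₀, xα, xβ, h₀, hα, hβ, rfl⟩

theorem cubic_mem_span_singleton (ha : IsMonsterAxis α β a) (v : A) :
    a * (a * (a * v)) - (α + β) • (a * (a * v)) + (α * β) • (a * v) ∈ span F {a} := by
  obtain ⟨l, x₀, xα, xβ, h₀, hα, hβ, rfl⟩ := ha.exists_decomp v
  rw [mem_eig] at h₀ hα hβ
  refine mem_span_singleton.2 ⟨(1 - α) * (1 - β) * l, ?_⟩
  simp only [mul_add, mul_smul_comm, ha.idem, h₀, hα, hβ]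
  module

theorem mul_mem_span_components (ha : IsMonsterAxis α β a) {u w z : A} (hu : u ∈ eig F a 0)
    (hw : w ∈ eig F a α) (hz : z ∈ eig F a β) :
    ∀ x ∈ span F {a, u, w, z}, a * x ∈ span F {a, u, w, z} := by
  refine mul_mem_span_of_forall_mem ?_
  rintro s (rfl | rfl | rfl | rfl)
  · rw [ha.idem]; exact subset_span (by simp)
  · rw [mem_eig.1 hu]; exact smul_mem _ _ (subset_span (by simp))
  · rw [mem_eig.1 hw]; exact smul_mem _ _ (subset_span (by simp))
  · rw [mem_eig.1 hz]; exact smul_mem _ _ (subset_span (by simp))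

theorem span_orbit_eq (ha : IsMonsterAxis α β a) (hα0 : α ≠ 0) (hα1 : α ≠ 1) (hβ0 : β ≠ 0)
    (hβ1 : β ≠ 1) (hαβ : α ≠ β) {l : F} {b u w z : A} (hu : u ∈ eig F a 0)
    (hw : w ∈ eig F a α) (hz : z ∈ eig F a β) (hb : b = l • a + u + w + z) :
    span F {a, b, a * b, a * (a * b)} = span F {a, u, w, z} := by
  have hS := ha.mul_mem_span_components hu hw hz
  have hO : ∀ x ∈ span F {a, b, a * b, a * (a * b)}, a * x ∈ span F {a, b, a * b, a * (a * b)} := by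
    refine mul_mem_span_of_forall_mem ?_
    rintro s (rfl | rfl | rfl | rfl)
    · rw [ha.idem]; exact subset_span (by simp)
    · exact subset_span (by simp)
    · exact subset_span (by simp)
    · have hsplit : a * (a * (a * b)) =
          (a * (a * (a * b)) - (α + β) • (a * (a * b)) + (α * β) • (a * b))
            + ((α + β) • (a * (a * b)) - (α * β) • (a * b)) := by abel
      rw [hsplit]
      exact add_mem (span_mono (by simp) (ha.cubic_mem_span_singleton b))
        (sub_mem (smul_mem _ _ (subset_span (by simp))) (smul_mem _ _ (subset_span (by simp))))
  apply le_antisymm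
  · have hbS : b ∈ span F {a, u, w, z} := by
      rw [hb]
      exact add_mem (add_mem (add_mem (smul_mem _ _ (subset_span (by simp)))
        (subset_span (by simp))) (subset_span (by simp))) (subset_span (by simp))
    rw [span_le]
    rintro s (rfl | rfl | rfl | rfl)
    · exact subset_span (by simp)
    · exact hbS
    · exact hS _ hbS
    · exact hS _ (hS _ hbS)
  · have hl : l • a ∈ eig F a 1 := smul_mem _ _ ha.self_mem_eig_one
    obtain ⟨-, hu', hw', hz'⟩ := eig_components_mem hα0 hα1 hβ0 hβ1 hαβ hO hl hu hw hz
      (hb ▸ subset_span (by simp))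
    rw [span_le]
    rintro s (rfl | rfl | rfl | rfl)
    exacts [subset_span (by simp), hu', hw', hz']

theorem mul_mem_span_singleton_of_mem_sup (ha : IsMonsterAxis α β a) {y : A}
    (hy : y ∈ eig F a 1 ⊔ eig F a 0) : a * y ∈ span F {a} := by
  obtain ⟨y₁, hy₁, y₀, hy₀, rfl⟩ := mem_sup.1 hy
  rw [mul_add, mem_eig.1 hy₁, mem_eig.1 hy₀, one_smul, zero_smul, add_zero, ← ha.primitive]
  exact hy₁

theorem two_smul_mul_eq_of_idem (ha : IsMonsterAxis α β a) (hα0 : α ≠ 0) (hα1 : α ≠ 1) {ν : F}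
    {x p q : A} (hp : p ∈ eig F a 0) (hq : q ∈ eig F a α) (hx : x = ν • a + p + q)
    (hxx : x * x = x) : (2 : F) • (p * q) = (1 - 2 * ν * α) • q := by
  obtain ⟨y₁, hy₁, y₀, hy₀, hqq⟩ := mem_sup.1 (ha.mulaa q hq q hq)
  have hexp : x * x = (ν * ν) • a + (2 * ν * α) • q + p * p + (2 : F) • (p * q) + (y₁ + y₀) := by
    rw [hx]
    simp only [add_mul, mul_add, smul_mul_assoc, mul_smul_comm, ha.idem, mul_comm p a,
      mul_comm q a, mul_comm q p, mem_eig.1 hp, mem_eig.1 hq, ← hqq]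
    module
  have h₁ : (ν * ν) • a + y₁ - ν • a ∈ eig F a 1 :=
    sub_mem (add_mem (smul_mem _ _ ha.self_mem_eig_one) hy₁) (smul_mem _ _ ha.self_mem_eig_one)
  have h₀ : p * p + y₀ - p ∈ eig F a 0 := sub_mem (add_mem (ha.mul00 p hp p hp) hy₀) hp
  have hα : (2 * ν * α - 1) • q + (2 : F) • (p * q) ∈ eig F a α :=
    add_mem (smul_mem _ _ hq) (smul_mem _ _ (ha.mul0a p hp q hq))
  -- `x * x - x = 0` split along `A₁(a) ⊕ A₀(a) ⊕ A_α(a)`; its `α`-part must vanish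
  have hsum : (ν * ν) • a + y₁ - ν • a + (p * p + y₀ - p) + 0
      + ((2 * ν * α - 1) • q + (2 : F) • (p * q)) ∈ (⊥ : Submodule F A) := by
    rw [mem_bot]
    linear_combination (norm := module) hxx + hx - hexp
  have hbot : ∀ y ∈ (⊥ : Submodule F A), LinearMap.mulLeft F a y ∈ (⊥ : Submodule F A) := by
    intro y hy
    rw [mem_bot] at hy ⊢
    simp [hy]
  have hαpart := eigencomponent_mem_of_mapsTo hbot hα1.symm hα0.symm hα0.symm h₁ h₀
    (zero_mem (eig F a 0)) hα hsum
  rw [mem_bot] at hαpart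
  linear_combination (norm := module) hαpart

theorem mul_mem_span_orbit_of_eig_eq_bot (hb : IsMonsterAxis α β b) (hJb : eig F b β = ⊥)
    (h2 : (2 : F) ≠ 0) (hα0 : α ≠ 0) (hα1 : α ≠ 1) {a : A} (haa : a * a = a) :
    ∀ x ∈ span F {a, b, a * b, a * (a * b)}, b * x ∈ span F {a, b, a * b, a * (a * b)} := by
  obtain ⟨ν, p, q, z, hp, hq, hz, hdec⟩ := hb.exists_decomp a
  rw [hJb, mem_bot] at hz
  rw [hz, add_zero] at hdec
  have hbp : b * p = 0 := by rw [mem_eig.1 hp, zero_smul]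
  have hbq : b * q = α • q := mem_eig.1 hq
  have hbpq : b * (p * q) = α • (p * q) := mem_eig.1 (hb.mul0a p hp q hq)
  have hpq := hb.two_smul_mul_eq_of_idem hα0 hα1 hp hq hdec haa
  have hab : a * b = ν • b + α • q := by
    rw [hdec, add_mul, add_mul, smul_mul_assoc, hb.idem, mul_comm p, mul_comm q, hbp, hbq,
      add_zero]
  have haq : a * q = (ν * α) • q + p * q + q * q := by
    rw [hdec, add_mul, add_mul, smul_mul_assoc, hbq, smul_smul]
  have hbab : b * (a * b) = ν • b + (α * α) • q := by
    rw [hab, mul_add, mul_smul_comm, mul_smul_comm, hb.idem, hbq, smul_smul]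
  have hbaab : (2 : F) • (b * (a * (a * b))) =
      (2 * ν) • (b * (a * b)) + (α * α) • q + (2 * α) • (b * (q * q)) := by
    have haab : a * (a * b) = ν • (a * b) + α • (a * q) := by
      conv_lhs => rw [hab, mul_add, mul_smul_comm, mul_smul_comm]
    rw [haab, haq]
    simp only [mul_add, mul_smul_comm, hbq, hbpq]
    linear_combination (norm := module) (α * α) • hpq
  set O := span F {a, b, a * b, a * (a * b)}
  have hqO : q ∈ O := by
    rw [← smul_mem_iff _ hα0, show α • q = a * b - ν • b by rw [hab]; abel]
    exact sub_mem (subset_span (by simp)) (smul_mem _ _ (subset_span (by simp)))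
  refine mul_mem_span_of_forall_mem ?_
  rintro s (rfl | rfl | rfl | rfl)
  · rw [mul_comm]; exact subset_span (by simp)
  · rw [hb.idem]; exact subset_span (by simp)
  · rw [hbab]; exact add_mem (smul_mem _ _ (subset_span (by simp))) (smul_mem _ _ hqO)
  · rw [← smul_mem_iff _ h2, hbaab]
    refine add_mem (add_mem (smul_mem _ _ ?_) (smul_mem _ _ hqO)) (smul_mem _ _ ?_)
    · rw [hbab]; exact add_mem (smul_mem _ _ (subset_span (by simp))) (smul_mem _ _ hqO)
    · exact span_mono (by simp) (hb.mul_mem_span_singleton_of_mem_sup (hb.mulaa q hq q hq))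

theorem span_components_eq_top (ha : IsMonsterAxis α β a) (hα0 : α ≠ 0) (hα1 : α ≠ 1)
    (hβ0 : β ≠ 0) (hβ1 : β ≠ 1) (hαβ : α ≠ β) {l : F} {b u w z : A} (hu : u ∈ eig F a 0)
    (hw : w ∈ eig F a α) (hz : z ∈ eig F a β) (hb : b = l • a + u + w + z)
    (hbS : ∀ x ∈ span F {a, u, w, z}, b * x ∈ span F {a, u, w, z})
    (hgen : NonUnitalAlgebra.adjoin F {a, b} = ⊤) : span F {a, u, w, z} = ⊤ := by
  set S := span F {a, u, w, z}
  have haS := ha.mul_mem_span_components hu hw hz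
  have hS : a ∈ S ∧ u ∈ S ∧ w ∈ S ∧ z ∈ S :=
    ⟨subset_span (by simp), subset_span (by simp), subset_span (by simp), subset_span (by simp)⟩
  have hbS' : b ∈ S := hb ▸ add_mem (add_mem (add_mem (smul_mem _ _ hS.1) hS.2.1) hS.2.2.1) hS.2.2.2
  have hbmul : ∀ v, b * v = l • (a * v) + u * v + w * v + z * v := fun v ↦ by
    rw [hb, add_mul, add_mul, add_mul, smul_mul_assoc]
  obtain ⟨-, huu, huw, huz⟩ := eig_components_mem hα0 hα1 hβ0 hβ1 hαβ haS (zero_mem _)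
    (ha.mul00 u hu u hu) (ha.mul0a u hu w hw) (ha.mul0b u hu z hz)
    (show 0 + u * u + u * w + u * z ∈ S by
      convert hbS u hS.2.1 using 1
      rw [hbmul, mem_eig.1 hu, mul_comm w u, mul_comm z u]
      module)
  obtain ⟨y₁, hy₁, y₀, hy₀, hww⟩ := mem_sup.1 (ha.mulaa w hw w hw)
  obtain ⟨hy₁S, hy₀S, -, hwz⟩ := eig_components_mem hα0 hα1 hβ0 hβ1 hαβ haS hy₁ hy₀
    (add_mem (smul_mem _ _ (smul_mem _ _ hw)) (ha.mul0a u hu w hw)) (ha.mulab w hw z hz)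
    (show y₁ + y₀ + (l • α • w + u * w) + w * z ∈ S by
      convert hbS w hS.2.2.1 using 1
      rw [hbmul, mem_eig.1 hw, mul_comm z w, ← hww]
      abel)
  have hzz : z * z ∈ S := by
    have h := hbS z hS.2.2.2
    rw [hbmul, mem_eig.1 hz] at h
    convert sub_mem (sub_mem (sub_mem h (smul_mem _ l (smul_mem _ β hS.2.2.2))) huz) hwz using 1
    abel
  have hmul : ∀ x y, x ∈ S → y ∈ S → x * y ∈ S := fun x y hx hy ↦ by
    refine mul_mem_span_of_forall_mul_mem ?_ hx hy
    rintro s (rfl | rfl | rfl | rfl) t (rfl | rfl | rfl | rfl) <;>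
      first
        | exact haS _ (subset_span (by simp))
        | (rw [mul_comm]; exact haS _ (subset_span (by simp)))
        | assumption
        | (rw [mul_comm]; assumption)
        | exact hww ▸ add_mem hy₁S hy₀S
  have hadj := NonUnitalAlgebra.adjoin_le (S := S.toNonUnitalSubalgebra hmul)
    (s := {a, b}) (by rintro _ (rfl | rfl); exacts [hS.1, hbS'])
  rw [hgen] at hadj
  exact eq_top_iff.2 fun x _ ↦ hadj trivial

end IsMonsterAxis

theorem skew_span_general
    {F : Type*} [Field F] {A : Type*} [NonUnitalNonAssocCommRing A]
    [Module F A] [SMulCommClass F A A] [IsScalarTower F A A]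
    (hchar : (2 : F) ≠ 0) {α β : F}
    (hα0 : α ≠ 0) (hα1 : α ≠ 1) (hβ0 : β ≠ 0) (hβ1 : β ≠ 1) (hαβ : α ≠ β)
    {a b c : A}
    (ha : IsMonsterAxis α β a) (hb : IsMonsterAxis α β b)
    (hJb : eig F b β = ⊥)
    (τ : A →ₗ[F] A)
    (hτfix : ∀ v ∈ eig F a 1 ⊔ eig F a 0 ⊔ eig F a α, τ v = v)
    (hτneg : ∀ v ∈ eig F a β, τ v = -v)
    (hc : c = τ b)
    (hgen : NonUnitalAlgebra.adjoin F {a, b} = ⊤)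
    {σ : A} (hσ : σ = a * b - β • (a + b))
    :
    Submodule.span F {a, b, c, σ} = ⊤ ∧ Module.finrank F A ≤ 4 := by
  obtain ⟨l, u, w, z, hu, hw, hz, hbdec⟩ := ha.exists_decomp b
  have hV : span F {a, u, w, z} = ⊤ := by
    refine ha.span_components_eq_top hα0 hα1 hβ0 hβ1 hαβ hu hw hz hbdec ?_ hgen
    rw [← ha.span_orbit_eq hα0 hα1 hβ0 hβ1 hαβ hu hw hz hbdec]
    exact hb.mul_mem_span_orbit_of_eig_eq_bot hJb hchar hα0 hα1 ha.idem
  have hcdec : c = l • a + u + w - z := by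
    have hfix : l • a + u + w ∈ eig F a 1 ⊔ eig F a 0 ⊔ eig F a α :=
      add_mem (add_mem (mem_sup_left (mem_sup_left (smul_mem _ _ ha.self_mem_eig_one)))
        (mem_sup_left (mem_sup_right hu))) (mem_sup_right hw)
    rw [hc, hbdec, map_add, hτfix _ hfix, hτneg z hz, sub_eq_add_neg]
  have hab : a * b = l • a + α • w + β • z := by
    rw [hbdec, mul_add, mul_add, mul_add, mul_smul_comm, ha.idem, mem_eig.1 hu, mem_eig.1 hw,
      mem_eig.1 hz, zero_smul, add_zero]
  have hS : span F {a, b, c, σ} = ⊤ :=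
    top_le_iff.1 (hV ▸ span_components_le_span hchar hα0 hbdec hcdec (hab ▸ hσ))
  exact ⟨hS, finrank_le_four_of_span_eq_top hS⟩

/-- **Spanning set in the skew `X'(1+2)` configuration.**
With `σ := ab - β(a+b)`, the algebra `A` is linearly spanned by `{a, b, c, σ}`;
in particular `dim_F A ≤ 4`. -/
theorem skew_span
    {F : Type*} [Field F] {A : Type*} [NonUnitalNonAssocCommRing A]
    [Module F A] [SMulCommClass F A A] [IsScalarTower F A A]
    (hchar : (2 : F) ≠ 0) {α β : F}
    (hα0 : α ≠ 0) (hα1 : α ≠ 1) (hβ0 : β ≠ 0) (hβ1 : β ≠ 1) (hαβ : α ≠ β)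
    {a b c : A}
    (ha : IsMonsterAxis α β a) (hb : IsMonsterAxis α β b)
    (hJb : eig F b β = ⊥)
    (τ : A →ₗ[F] A)
    (hτfix : ∀ v ∈ eig F a 1 ⊔ eig F a 0 ⊔ eig F a α, τ v = v)
    (hτneg : ∀ v ∈ eig F a β, τ v = -v)
    (hc : c = τ b) (hskew : c ≠ b)
    (hgen : NonUnitalAlgebra.adjoin F {a, b} = ⊤)
    {σ : A} (hσ : σ = a * b - β • (a + b))
    :
    Submodule.span F {a, b, c, σ} = ⊤ ∧ Module.finrank F A ≤ 4 :=
  skew_span_general hchar hα0 hα1 hβ0 hβ1 hαβ ha hb hJb τ hτfix hτneg hc hgen hσ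
end

section
/- Let k ≥ 1 be an odd natural number. Consider Z/4kZ and the equivalence relation ~ generated by i ~ i + 2k for every even element i of Z/4kZ, with equivalence classes [i]. Then: (1) the three classes [0], [k], [−k] are pairwise distinct; (2) for each x ∈ {0, k, −k}, the reflection [i] ↦ [2x − i] is well defined on classes and maps the set S = {[0], [k], [−k]} into itself; (3) the reflection at [k] and the reflection at [−k] fix S pointwise (in particular [2k − 0] = [0], [2k − k] = [k], [2k − (−k)] = [−k]); and (4) the reflection at [0] fixes [0] and interchanges [k] and [−k]. Hence S is a closed subaxet of the skew axet X'(k+2k) isomorphic to X'(1+2). -/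
/-- The generating relation for the skew axet `X'(k+2k)`:  `X'(k+2k)` is the quotient of
`ZMod (4k)` (the axet `X(4k)`) by the equivalence relation generated by identifying every
even element `i` with `i + 2k`. -/
def skewRel (k : ℕ) (i j : ZMod (4 * k)) : Prop :=
  Even i ∧ j = i + 2 * k

/-- **A subaxet `X'(1+2)` inside the skew axet `X'(k+2k)` for odd `k`.**
Let `k ≥ 1` be odd, and let `q : ZMod (4k) → X'(k+2k)` be the quotient map onto the
classes of the equivalence relation generated by `i ~ i + 2k` for even `i`.  Then:
(1) the classes `[0],[k],[-k]` are pairwise distinct;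
(2) for each `x ∈ {0, k, -k}` the reflection `[i] ↦ [2x - i]` is well defined on classes
and maps `S = {[0],[k],[-k]}` into itself;
(3) the reflections at `[k]` and at `[-k]` fix `S` pointwise; and
(4) the reflection at `[0]` fixes `[0]` and interchanges `[k]` and `[-k]`.
Hence `S` is a closed subaxet of `X'(k+2k)` isomorphic to the skew axet `X'(1+2)`. -/
theorem skew_subaxet_of_odd (k : ℕ) (hk1 : 1 ≤ k) (hk : Odd k) :
    -- the quotient map onto the classes of `X'(k+2k)`
    ∀ q : ZMod (4 * k) → Quot (skewRel k), q = Quot.mk (skewRel k) →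
    -- (1) the three classes `[0], [k], [-k]` are pairwise distinct
    (q 0 ≠ q (k : ZMod (4 * k)) ∧ q 0 ≠ q (-(k : ZMod (4 * k))) ∧
      q (k : ZMod (4 * k)) ≠ q (-(k : ZMod (4 * k)))) ∧
    -- (2) for `x ∈ {0, k, -k}`, the reflection `[i] ↦ [2x - i]` is well defined on
    -- classes and maps `S = {[0], [k], [-k]}` into itself
    (∀ x ∈ ({0, (k : ZMod (4 * k)), -(k : ZMod (4 * k))} : Set (ZMod (4 * k))),
      (∀ i j : ZMod (4 * k), skewRel k i j → q (2 * x - i) = q (2 * x - j)) ∧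
      (∀ i ∈ ({0, (k : ZMod (4 * k)), -(k : ZMod (4 * k))} : Set (ZMod (4 * k))),
        q (2 * x - i) ∈
          ({q 0, q (k : ZMod (4 * k)), q (-(k : ZMod (4 * k)))} : Set (Quot (skewRel k))))) ∧
    -- (3) the reflections at `[k]` and at `[-k]` fix `S` pointwise
    (q (2 * (k : ZMod (4 * k)) - 0) = q 0 ∧
      q (2 * (k : ZMod (4 * k)) - k) = q (k : ZMod (4 * k)) ∧
      q (2 * (k : ZMod (4 * k)) - (-(k : ZMod (4 * k)))) = q (-(k : ZMod (4 * k))) ∧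
      q (2 * (-(k : ZMod (4 * k))) - 0) = q 0 ∧
      q (2 * (-(k : ZMod (4 * k))) - k) = q (k : ZMod (4 * k)) ∧
      q (2 * (-(k : ZMod (4 * k))) - (-(k : ZMod (4 * k)))) = q (-(k : ZMod (4 * k)))) ∧
    -- (4) the reflection at `[0]` fixes `[0]` and interchanges `[k]` and `[-k]`
    (q (2 * 0 - 0) = q 0 ∧ q (2 * 0 - (k : ZMod (4 * k))) = q (-(k : ZMod (4 * k))) ∧
      q (2 * 0 - (-(k : ZMod (4 * k)))) = q (k : ZMod (4 * k))) := by
  intro q hq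
  subst hq
  set q := Quot.mk (skewRel k) with hq
  haveI : NeZero (4 * k) := ⟨by omega⟩
  have h4k : ((4 * k : ℕ) : ZMod (4 * k)) = 0 := ZMod.natCast_self _
  have h4 : (4 : ZMod (4 * k)) * (k : ZMod (4 * k)) = 0 := by
    push_cast at h4k; linear_combination h4k
  have hklt : k < 4 * k := by omega
  have h2klt : 2 * k < 4 * k := by omega
  have h3klt : 3 * k < 4 * k := by omega
  have hk2 : k % 2 = 1 := Nat.odd_iff.mp hk
  -- the invariant
  have hneg : -(k : ZMod (4 * k)) = ((3 * k : ℕ) : ZMod (4 * k)) := by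
    push_cast; linear_combination -h4
  set g : ZMod (4 * k) → ZMod (4 * k) :=
    fun i => if (ZMod.val i) % 2 = 0 then 2 * i else i with hgdef
  have hevenval : ∀ i : ZMod (4 * k), Even i → i.val % 2 = 0 := by
    rintro i ⟨r, rfl⟩
    rw [ZMod.val_add, Nat.mod_mod_of_dvd _ ⟨2 * k, by ring⟩]
    omega
  have h2kval : (2 * (k : ZMod (4 * k))).val = 2 * k := by
    have : ((2 * k : ℕ) : ZMod (4 * k)).val = 2 * k := ZMod.val_natCast_of_lt h2klt
    rw [← this]; push_cast; ring_nf
  have hg : ∀ i j, skewRel k i j → g i = g j := by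
    rintro i j ⟨hi, rfl⟩
    have hiv : i.val % 2 = 0 := hevenval i hi
    have hjv : (i + 2 * (k : ZMod (4 * k))).val % 2 = 0 := by
      rw [ZMod.val_add, Nat.mod_mod_of_dvd _ ⟨2 * k, by ring⟩, Nat.add_mod, h2kval]
      omega
    simp only [hgdef, hiv, hjv, if_pos]
    linear_combination -h4
  have hginv : ∀ a b : ZMod (4 * k),
      Quot.mk (skewRel k) a = Quot.mk (skewRel k) b → g a = g b := by
    intro a b h
    exact congrArg (Quot.lift g hg) h
  have hgval0 : g 0 = 0 := by simp [hgdef]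
  have hgvalk : g (k : ZMod (4 * k)) = (k : ZMod (4 * k)) := by
    simp only [hgdef, ZMod.val_natCast_of_lt hklt]
    rw [if_neg (by omega)]
  have hgvalnk : g (-(k : ZMod (4 * k))) = -(k : ZMod (4 * k)) := by
    rw [hneg]
    simp only [hgdef, ZMod.val_natCast_of_lt h3klt]
    rw [if_neg (by omega)]
  -- the basic class identification
  have e1 : q 0 = q (2 * (k : ZMod (4 * k))) :=
    Quot.sound ⟨⟨0, by ring⟩, by ring⟩
  -- part (1)
  have p1 : q 0 ≠ q (k : ZMod (4 * k)) := by
    intro h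
    have := hginv _ _ h
    rw [hgval0, hgvalk] at this
    have := congrArg ZMod.val this
    rw [ZMod.val_zero, ZMod.val_natCast_of_lt hklt] at this
    omega
  have p2 : q 0 ≠ q (-(k : ZMod (4 * k))) := by
    intro h
    have := hginv _ _ h
    rw [hgval0, hgvalnk, hneg] at this
    have := congrArg ZMod.val this
    rw [ZMod.val_zero, ZMod.val_natCast_of_lt h3klt] at this
    omega
  have p3 : q (k : ZMod (4 * k)) ≠ q (-(k : ZMod (4 * k))) := by
    intro h
    have := hginv _ _ h
    rw [hgvalk, hgvalnk, hneg] at this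
    have := congrArg ZMod.val this
    rw [ZMod.val_natCast_of_lt hklt, ZMod.val_natCast_of_lt h3klt] at this
    omega
  -- the nine reflection computations
  have A1 : q (2 * (0 : ZMod (4 * k)) - 0) = q 0 := by norm_num
  have A2 : q (2 * (0 : ZMod (4 * k)) - (k : ZMod (4 * k))) = q (-(k : ZMod (4 * k))) := by
    rw [show 2 * (0 : ZMod (4 * k)) - (k : ZMod (4 * k)) = -(k : ZMod (4 * k)) from by ring]
  have A3 : q (2 * (0 : ZMod (4 * k)) - (-(k : ZMod (4 * k)))) = q (k : ZMod (4 * k)) := by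
    rw [show 2 * (0 : ZMod (4 * k)) - (-(k : ZMod (4 * k))) = (k : ZMod (4 * k)) from by ring]
  have A4 : q (2 * (k : ZMod (4 * k)) - 0) = q 0 := by
    rw [show 2 * (k : ZMod (4 * k)) - 0 = 2 * (k : ZMod (4 * k)) from by ring]
    exact e1.symm
  have A5 : q (2 * (k : ZMod (4 * k)) - (k : ZMod (4 * k))) = q (k : ZMod (4 * k)) := by
    rw [show 2 * (k : ZMod (4 * k)) - (k : ZMod (4 * k)) = (k : ZMod (4 * k)) from by ring]
  have A6 : q (2 * (k : ZMod (4 * k)) - (-(k : ZMod (4 * k)))) = q (-(k : ZMod (4 * k))) := by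
    rw [show 2 * (k : ZMod (4 * k)) - (-(k : ZMod (4 * k))) = -(k : ZMod (4 * k)) from by
      linear_combination h4]
  have A7 : q (2 * (-(k : ZMod (4 * k))) - 0) = q 0 := by
    rw [show 2 * (-(k : ZMod (4 * k))) - 0 = 2 * (k : ZMod (4 * k)) from by
      linear_combination -h4]
    exact e1.symm
  have A8 : q (2 * (-(k : ZMod (4 * k))) - (k : ZMod (4 * k))) = q (k : ZMod (4 * k)) := by
    rw [show 2 * (-(k : ZMod (4 * k))) - (k : ZMod (4 * k)) = (k : ZMod (4 * k)) from by
      linear_combination -h4]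
  have A9 : q (2 * (-(k : ZMod (4 * k))) - (-(k : ZMod (4 * k)))) = q (-(k : ZMod (4 * k))) := by
    rw [show 2 * (-(k : ZMod (4 * k))) - (-(k : ZMod (4 * k))) = -(k : ZMod (4 * k)) from by
      ring]
  refine ⟨⟨p1, p2, p3⟩, ?_, ⟨A4, A5, A6, A7, A8, A9⟩, ⟨A1, A2, A3⟩⟩
  intro x hx
  constructor
  · rintro i j ⟨hi, rfl⟩
    have heven : Even (2 * x - i - 2 * (k : ZMod (4 * k))) := by
      obtain ⟨r, hr⟩ := hi
      exact ⟨x - r - k, by rw [hr]; ring⟩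
    have := Quot.sound (r := skewRel k) (a := 2 * x - i - 2 * (k : ZMod (4 * k)))
      (b := 2 * x - i) ⟨heven, by ring⟩
    rw [show 2 * x - (i + 2 * (k : ZMod (4 * k))) = 2 * x - i - 2 * (k : ZMod (4 * k)) from by
      ring]
    exact this.symm
  · intro i hi
    simp only [Set.mem_insert_iff, Set.mem_singleton_iff] at hx hi ⊢
    rcases hx with rfl | rfl | rfl <;> rcases hi with rfl | rfl | rfl
    · exact Or.inl A1
    · exact Or.inr (Or.inr A2)
    · exact Or.inr (Or.inl A3)
    · exact Or.inl A4
    · exact Or.inr (Or.inl A5)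
    · exact Or.inr (Or.inr A6)
    · exact Or.inl A7
    · exact Or.inr (Or.inl A8)
    · exact Or.inr (Or.inr A9)
end

section
/- Let F be a field of characteristic ∉ {2, 3, 5}. In the algebra Q₂(1/3), with 𝟙 := (3/5)(s₁ + s₂ + d₁ + d₂), t₁ := 𝟙 − d₁ and t₂ := 𝟙 − d₂: t₁ is an idempotent, s₁·t₁ = (2/3)s₁ + (1/6)t₁ − (1/6)t₂, t₁·t₂ = (2/3)s₁ + (2/3)s₂ − (1/3)t₁ − (1/3)t₂, and the (nonunital) subalgebra of Q₂(1/3) generated by {s₁, t₁} is all of Q₂(1/3). -/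
/-!
The three identities are coordinate computations. For generation, the product `s₁ t₁` is a
combination of `s₁`, `t₁` and `t₂`, so `t₂` lies in the subalgebra; then `t₁ t₂` brings in `s₂`.
Since `𝟙 = 3 (t₁ + t₂ - s₁ - s₂)`, the unit and hence `dᵢ = 𝟙 - tᵢ` lie in it as well, so it
contains the whole basis.
-/

/-- The multiplication of the algebra `Q₂(1/3)` in the basis
`s₁ = e 0`, `s₂ = e 1`, `d₁ = e 2`, `d₂ = e 3`. -/
def mulQ2 {F : Type*} [Field F] (u v : Fin 4 → F) : Fin 4 → F :=
  ![u 0 * v 0 + (1/3) * (u 0*v 2 + u 2*v 0) + (1/3) * (u 0*v 3 + u 3*v 0)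
      - (1/3) * (u 2*v 3 + u 3*v 2),
    u 1 * v 1 + (1/3) * (u 1*v 2 + u 2*v 1) + (1/3) * (u 1*v 3 + u 3*v 1)
      - (1/3) * (u 2*v 3 + u 3*v 2),
    u 2 * v 2 + (1/6) * (u 0*v 2 + u 2*v 0) - (1/6) * (u 0*v 3 + u 3*v 0)
      + (1/6) * (u 1*v 2 + u 2*v 1) - (1/6) * (u 1*v 3 + u 3*v 1) + (1/3) * (u 2*v 3 + u 3*v 2),
    u 3 * v 3 - (1/6) * (u 0*v 2 + u 2*v 0) + (1/6) * (u 0*v 3 + u 3*v 0)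
      - (1/6) * (u 1*v 2 + u 2*v 1) + (1/6) * (u 1*v 3 + u 3*v 1) + (1/3) * (u 2*v 3 + u 3*v 2)]

theorem six_ne_zero_of_two_three {R : Type*} [NonAssocSemiring R] [NoZeroDivisors R]
    (h2 : (2 : R) ≠ 0) (h3 : (3 : R) ≠ 0) : (6 : R) ≠ 0 := by
  have h : (6 : R) = 2 * 3 := by rw [two_mul]; norm_num
  exact h ▸ mul_ne_zero h2 h3

namespace Q2

variable (F : Type*) [Field F]

def s₁ : Fin 4 → F := ![1, 0, 0, 0]
def s₂ : Fin 4 → F := ![0, 1, 0, 0]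
def d₁ : Fin 4 → F := ![0, 0, 1, 0]
def d₂ : Fin 4 → F := ![0, 0, 0, 1]
/-- The identity element of `Q₂(1/3)`. -/
def one : Fin 4 → F := (3 / 5 : F) • (s₁ F + s₂ F + d₁ F + d₂ F)
def t₁ : Fin 4 → F := one F - d₁ F
def t₂ : Fin 4 → F := one F - d₂ F

variable {F}

theorem t₁_eq (h5 : (5 : F) ≠ 0) : t₁ F = ![3 / 5, 3 / 5, -2 / 5, 3 / 5] := by
  ext i; fin_cases i <;> simp [t₁, one, s₁, s₂, d₁, d₂]
  field_simp; ring

theorem t₂_eq (h5 : (5 : F) ≠ 0) : t₂ F = ![3 / 5, 3 / 5, 3 / 5, -2 / 5] := by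
  ext i; fin_cases i <;> simp [t₂, one, s₁, s₂, d₁, d₂]
  field_simp; ring

theorem one_eq_three_smul_t_sub_s (h5 : (5 : F) ≠ 0) :
    one F = (3 : F) • (t₁ F + t₂ F - s₁ F - s₂ F) := by
  rw [t₁_eq h5, t₂_eq h5]
  ext i; fin_cases i <;> simp [one, s₁, s₂, d₁, d₂] <;> field_simp <;> ring

section Products

variable (h2 : (2 : F) ≠ 0) (h3 : (3 : F) ≠ 0) (h5 : (5 : F) ≠ 0)
include h2 h3 h5

theorem mulQ2_t₁_self : mulQ2 (t₁ F) (t₁ F) = t₁ F := by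
  have := six_ne_zero_of_two_three h2 h3
  rw [t₁_eq h5]
  ext i; fin_cases i <;> simp [mulQ2] <;> field_simp <;> ring

theorem mulQ2_s₁_t₁ :
    mulQ2 (s₁ F) (t₁ F) = (2 / 3 : F) • s₁ F + (1 / 6 : F) • t₁ F - (1 / 6 : F) • t₂ F := by
  have := six_ne_zero_of_two_three h2 h3
  rw [t₁_eq h5, t₂_eq h5]
  ext i; fin_cases i <;> simp [mulQ2, s₁] <;> field_simp <;> ring

theorem mulQ2_t₁_t₂ :
    mulQ2 (t₁ F) (t₂ F) =
      (2 / 3 : F) • s₁ F + (2 / 3 : F) • s₂ F - (1 / 3 : F) • t₁ F - (1 / 3 : F) • t₂ F := by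
  have := six_ne_zero_of_two_three h2 h3
  rw [t₁_eq h5, t₂_eq h5]
  ext i; fin_cases i <;> simp [mulQ2, s₁, s₂] <;> field_simp <;> ring

end Products

theorem eq_top_of_basis_mem (S : Submodule F (Fin 4 → F)) (h₁ : s₁ F ∈ S) (h₂ : s₂ F ∈ S)
    (h₃ : d₁ F ∈ S) (h₄ : d₂ F ∈ S) : S = ⊤ := by
  refine eq_top_iff.2 fun v _ => ?_
  have hv : v = v 0 • s₁ F + v 1 • s₂ F + v 2 • d₁ F + v 3 • d₂ F := by
    ext i; fin_cases i <;> simp [s₁, s₂, d₁, d₂]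
  rw [hv]
  apply_rules [add_mem, Submodule.smul_mem]

theorem eq_top_of_s₁_t₁_mem (h2 : (2 : F) ≠ 0) (h3 : (3 : F) ≠ 0) (h5 : (5 : F) ≠ 0)
    (S : Submodule F (Fin 4 → F)) (hs₁ : s₁ F ∈ S) (ht₁ : t₁ F ∈ S)
    (hmul : ∀ u v : Fin 4 → F, u ∈ S → v ∈ S → mulQ2 u v ∈ S) : S = ⊤ := by
  have := six_ne_zero_of_two_three h2 h3
  have ht₂ : t₂ F ∈ S := by
    have key : t₂ F = (4 : F) • s₁ F + t₁ F - (6 : F) • mulQ2 (s₁ F) (t₁ F) := by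
      rw [mulQ2_s₁_t₁ h2 h3 h5]
      match_scalars <;> field_simp <;> ring
    rw [key]
    apply_rules [add_mem, sub_mem, Submodule.smul_mem]
  have hs₂ : s₂ F ∈ S := by
    have key : s₂ F = (3 / 2 : F) • mulQ2 (t₁ F) (t₂ F) - s₁ F
        + (1 / 2 : F) • t₁ F + (1 / 2 : F) • t₂ F := by
      rw [mulQ2_t₁_t₂ h2 h3 h5]
      match_scalars <;> field_simp <;> ring
    rw [key]
    apply_rules [add_mem, sub_mem, Submodule.smul_mem]
  have hone : one F ∈ S := by
    rw [one_eq_three_smul_t_sub_s h5]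
    apply_rules [add_mem, sub_mem, Submodule.smul_mem]
  refine eq_top_of_basis_mem S hs₁ hs₂ ?_ ?_
  · simpa [t₁] using sub_mem hone ht₁
  · simpa [t₂] using sub_mem hone ht₂

end Q2

/-- **`Q₂(1/3)` is generated by the two axes `s₁` and `t₁`.**
Let `F` be a field of characteristic `∉ {2, 3, 5}`.  In the algebra `Q₂(1/3)` with
`𝟙 := (3/5)(s₁ + s₂ + d₁ + d₂)`, `t₁ := 𝟙 - d₁` and `t₂ := 𝟙 - d₂`: `t₁` is an
idempotent, `s₁·t₁ = (2/3)s₁ + (1/6)t₁ - (1/6)t₂`,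
`t₁·t₂ = (2/3)s₁ + (2/3)s₂ - (1/3)t₁ - (1/3)t₂`, and the (nonunital) subalgebra
generated by `{s₁, t₁}` is all of `Q₂(1/3)`. -/
theorem Q2_generated_by_s1_t1
    {F : Type*} [Field F]
    (h2 : (2 : F) ≠ 0) (h3 : (3 : F) ≠ 0) (h5 : (5 : F) ≠ 0)
    (s₁ s₂ d₁ d₂ one t₁ t₂ : Fin 4 → F)
    (hs₁ : s₁ = ![1, 0, 0, 0]) (hs₂ : s₂ = ![0, 1, 0, 0])
    (hd₁ : d₁ = ![0, 0, 1, 0]) (hd₂ : d₂ = ![0, 0, 0, 1])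
    (hone : one = (3 / 5 : F) • (s₁ + s₂ + d₁ + d₂))
    (ht₁ : t₁ = one - d₁) (ht₂ : t₂ = one - d₂) :
    mulQ2 t₁ t₁ = t₁ ∧
    mulQ2 s₁ t₁ = (2 / 3 : F) • s₁ + (1 / 6 : F) • t₁ - (1 / 6 : F) • t₂ ∧
    mulQ2 t₁ t₂ = (2 / 3 : F) • s₁ + (2 / 3 : F) • s₂ - (1 / 3 : F) • t₁ - (1 / 3 : F) • t₂ ∧
    (∀ S : Submodule F (Fin 4 → F), s₁ ∈ S → t₁ ∈ S →
      (∀ u v : Fin 4 → F, u ∈ S → v ∈ S → mulQ2 u v ∈ S) → S = ⊤) := by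
  obtain rfl : s₁ = Q2.s₁ F := hs₁
  obtain rfl : s₂ = Q2.s₂ F := hs₂
  obtain rfl : d₁ = Q2.d₁ F := hd₁
  obtain rfl : d₂ = Q2.d₂ F := hd₂
  obtain rfl : one = Q2.one F := hone
  obtain rfl : t₁ = Q2.t₁ F := ht₁
  obtain rfl : t₂ = Q2.t₂ F := ht₂
  exact ⟨Q2.mulQ2_t₁_self h2 h3 h5, Q2.mulQ2_s₁_t₁ h2 h3 h5, Q2.mulQ2_t₁_t₂ h2 h3 h5,
    Q2.eq_top_of_s₁_t₁_mem h2 h3 h5⟩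
end

section
/- Let F be a field of characteristic ∉ {2, 3, 5}. In the algebra Q₂(1/3), with 𝟙 := (3/5)(s₁ + s₂ + d₁ + d₂) and t₁ := 𝟙 − d₁: one has t₁·d₁ = 0, t₁·(s₁ + s₂ − d₂) = (1/3)(s₁ + s₂ − d₂), and t₁·(s₁ − s₂) = (2/3)(s₁ − s₂); the set {t₁, d₁, s₁ + s₂ − d₂, s₁ − s₂} is a basis of Q₂(1/3) of eigenvectors of left multiplication by t₁ with eigenvalues 1, 0, 1/3, 2/3; and the linear map fixing t₁, d₁ and s₁ + s₂ − d₂ and negating s₁ − s₂ is an algebra automorphism of Q₂(1/3) which maps s₁ to s₂. (It is the Miyamoto involution of the axis t₁, exhibiting the skew axet X'(1+2).) -/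
def tauQ2 {F : Type*} [Field F] : (Fin 4 → F) →ₗ[F] (Fin 4 → F) where
  toFun x := ![x 1, x 0, x 2, x 3]
  map_add' a b := by funext i; fin_cases i <;> simp
  map_smul' c a := by funext i; fin_cases i <;> simp

lemma pow235 {F : Type*} [Field F] (h2 : (2 : F) ≠ 0) (h3 : (3 : F) ≠ 0)
    (h5 : (5 : F) ≠ 0) (a b c : ℕ) : ((2:F)^a * 3^b * 5^c) ≠ 0 :=
  mul_ne_zero (mul_ne_zero (pow_ne_zero _ h2) (pow_ne_zero _ h3)) (pow_ne_zero _ h5)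

set_option maxHeartbeats 8000000 in
/-- **Eigenvectors and Miyamoto involution of the axis `t₁` in `Q₂(1/3)`.**
Let `F` be a field of characteristic `∉ {2, 3, 5}`.  In the algebra `Q₂(1/3)` with
`𝟙 := (3/5)(s₁ + s₂ + d₁ + d₂)` and `t₁ := 𝟙 - d₁`:  `t₁·d₁ = 0`,
`t₁·(s₁+s₂-d₂) = (1/3)(s₁+s₂-d₂)`, `t₁·(s₁-s₂) = (2/3)(s₁-s₂)`;
`{t₁, d₁, s₁+s₂-d₂, s₁-s₂}` is a basis of eigenvectors of left multiplication by `t₁`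
with eigenvalues `1, 0, 1/3, 2/3`; and the linear map fixing `t₁`, `d₁`, `s₁+s₂-d₂`
and negating `s₁-s₂` is an algebra automorphism mapping `s₁` to `s₂`
(the Miyamoto involution of `t₁`, exhibiting the skew axet `X'(1+2)`). -/
theorem Q2_miyamoto
    {F : Type*} [Field F]
    (h2 : (2 : F) ≠ 0) (h3 : (3 : F) ≠ 0) (h5 : (5 : F) ≠ 0)
    (s₁ s₂ d₁ d₂ one t₁ : Fin 4 → F)
    (hs₁ : s₁ = ![1, 0, 0, 0]) (hs₂ : s₂ = ![0, 1, 0, 0])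
    (hd₁ : d₁ = ![0, 0, 1, 0]) (hd₂ : d₂ = ![0, 0, 0, 1])
    (hone : one = (3 / 5 : F) • (s₁ + s₂ + d₁ + d₂))
    (ht₁ : t₁ = one - d₁) :
    mulQ2 t₁ t₁ = t₁ ∧
    mulQ2 t₁ d₁ = 0 ∧
    mulQ2 t₁ (s₁ + s₂ - d₂) = (1 / 3 : F) • (s₁ + s₂ - d₂) ∧
    mulQ2 t₁ (s₁ - s₂) = (2 / 3 : F) • (s₁ - s₂) ∧
    LinearIndependent F ![t₁, d₁, s₁ + s₂ - d₂, s₁ - s₂] ∧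
    Submodule.span F {t₁, d₁, s₁ + s₂ - d₂, s₁ - s₂} = ⊤ ∧
    ∃ τ : (Fin 4 → F) →ₗ[F] (Fin 4 → F),
      τ t₁ = t₁ ∧ τ d₁ = d₁ ∧ τ (s₁ + s₂ - d₂) = s₁ + s₂ - d₂ ∧
      τ (s₁ - s₂) = -(s₁ - s₂) ∧
      (∀ u v : Fin 4 → F, τ (mulQ2 u v) = mulQ2 (τ u) (τ v)) ∧
      τ s₁ = s₂ := by
  have hne : ∀ a b c : ℕ, ((2:F)^a * 3^b * 5^c) ≠ 0 := pow235 h2 h3 h5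
  have hn4 : (4:F) ≠ 0 := by have h := hne 2 0 0; norm_num at h; exact h
  have hn6 : (6:F) ≠ 0 := by have h := hne 1 1 0; norm_num at h; exact h
  have hn10 : (10:F) ≠ 0 := by have h := hne 1 0 1; norm_num at h; exact h
  have hn12 : (12:F) ≠ 0 := by have h := hne 2 1 0; norm_num at h; exact h
  have hn15 : (15:F) ≠ 0 := by have h := hne 0 1 1; norm_num at h; exact h
  have hn20 : (20:F) ≠ 0 := by have h := hne 2 0 1; norm_num at h; exact h
  have hn25 : (25:F) ≠ 0 := by have h := hne 0 0 2; norm_num at h; exact h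
  have hn30 : (30:F) ≠ 0 := by have h := hne 1 1 1; norm_num at h; exact h
  have hn36 : (36:F) ≠ 0 := by have h := hne 2 2 0; norm_num at h; exact h
  have hn45 : (45:F) ≠ 0 := by have h := hne 0 2 1; norm_num at h; exact h
  have hn60 : (60:F) ≠ 0 := by have h := hne 2 1 1; norm_num at h; exact h
  have hn75 : (75:F) ≠ 0 := by have h := hne 0 1 2; norm_num at h; exact h
  have hn90 : (90:F) ≠ 0 := by have h := hne 1 2 1; norm_num at h; exact h
  have hn125 : (125:F) ≠ 0 := by have h := hne 0 0 3; norm_num at h; exact h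
  have hn150 : (150:F) ≠ 0 := by have h := hne 1 1 2; norm_num at h; exact h
  have hn225 : (225:F) ≠ 0 := by have h := hne 0 2 2; norm_num at h; exact h
  have hn375 : (375:F) ≠ 0 := by have h := hne 0 1 3; norm_num at h; exact h
  have hn450 : (450:F) ≠ 0 := by have h := hne 1 2 2; norm_num at h; exact h
  have hn625 : (625:F) ≠ 0 := by have h := hne 0 0 4; norm_num at h; exact h
  have hn750 : (750:F) ≠ 0 := by have h := hne 1 1 3; norm_num at h; exact h
  have hn1125 : (1125:F) ≠ 0 := by have h := hne 0 2 3; norm_num at h; exact h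
  have hn1875 : (1875:F) ≠ 0 := by have h := hne 0 1 4; norm_num at h; exact h
  have hn2250 : (2250:F) ≠ 0 := by have h := hne 1 2 3; norm_num at h; exact h
  have hn3750 : (3750:F) ≠ 0 := by have h := hne 1 1 4; norm_num at h; exact h
  have hn5625 : (5625:F) ≠ 0 := by have h := hne 0 2 4; norm_num at h; exact h
  have hn9375 : (9375:F) ≠ 0 := by have h := hne 0 1 5; norm_num at h; exact h
  have hn11250 : (11250:F) ≠ 0 := by have h := hne 1 2 4; norm_num at h; exact h
  have hn28125 : (28125:F) ≠ 0 := by have h := hne 0 2 5; norm_num at h; exact h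
  have hn46875 : (46875:F) ≠ 0 := by have h := hne 0 1 6; norm_num at h; exact h
  have hn140625 : (140625:F) ≠ 0 := by have h := hne 0 2 6; norm_num at h; exact h
  have hn281250 : (281250:F) ≠ 0 := by have h := hne 1 2 6; norm_num at h; exact h
  have hn84375 : (84375:F) ≠ 0 := by have h := hne 0 3 5; norm_num at h; exact h
  have hn16875 : (16875:F) ≠ 0 := by have h := hne 0 3 4; norm_num at h; exact h
  have hn421875 : (421875:F) ≠ 0 := by have h := hne 0 3 6; norm_num at h; exact h
  have hn67500 : (67500:F) ≠ 0 := by have h := hne 2 3 4; norm_num at h; exact h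
  have hnB : (158203125000:F) ≠ 0 := by have h := hne 3 4 12; norm_num at h; exact h
  have hnA : (14831542968750000:F) ≠ 0 := by have h := hne 4 5 18; norm_num at h; exact h
  subst hs₁ hs₂ hd₁ hd₂ hone ht₁
  have hT : (3/5:F) • ((![1,0,0,0] : Fin 4 → F) + ![0,1,0,0] + ![0,0,1,0] + ![0,0,0,1])
      - ![0,0,1,0] = ![3/5, 3/5, -(2/5), 3/5] := by
    funext i; fin_cases i <;> simp <;> (field_simp; try ring)
  have hC : (![1,0,0,0] : Fin 4 → F) + ![0,1,0,0] - ![0,0,0,1] = ![1,1,0,-1] := by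
    funext i; fin_cases i <;> simp
  have hE : (![1,0,0,0] : Fin 4 → F) - ![0,1,0,0] = ![1,-1,0,0] := by
    funext i; fin_cases i <;> simp
  rw [hT, hC, hE]
  refine ⟨?_, ?_, ?_, ?_, ?_, ?_, ?_⟩
  · funext i; fin_cases i <;>
      (simp [mulQ2, Matrix.vecHead, Matrix.vecTail]; try field_simp; try ring) <;>
      (try field_simp; try norm_num; try ring) <;> (try field_simp; try norm_num)
  · funext i; fin_cases i <;>
      (simp [mulQ2, Matrix.vecHead, Matrix.vecTail]; try field_simp; try ring) <;>
      (try field_simp; try norm_num; try ring) <;> (try field_simp; try norm_num)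
  · funext i; fin_cases i <;>
      (simp [mulQ2, Matrix.vecHead, Matrix.vecTail]; try field_simp; try ring) <;>
      (try field_simp; try norm_num; try ring) <;> (try field_simp; try norm_num)
  · funext i; fin_cases i <;>
      (simp [mulQ2, Matrix.vecHead, Matrix.vecTail]; try field_simp; try ring) <;>
      (try field_simp; try norm_num; try ring) <;> (try field_simp; try norm_num)
  · rw [Fintype.linearIndependent_iff]
    intro g hg
    have e0 := congrFun hg 0
    have e1 := congrFun hg 1
    have e2 := congrFun hg 2
    have e3 := congrFun hg 3
    simp [Fin.sum_univ_four, Matrix.vecHead, Matrix.vecTail] at e0 e1 e2 e3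
    field_simp at e0 e1 e2 e3
    have hg3 : g 3 = 0 := by
      have h' : (2:F) * (5 * g 3) = 0 := by linear_combination e0 - e1
      rcases mul_eq_zero.1 h' with h|h; exact absurd h h2
      rcases mul_eq_zero.1 h with h|h; exact absurd h h5; exact h
    have hg0 : g 0 = 0 := by
      have h' : (2:F) * (2 * (3 * g 0)) = 0 := by linear_combination e0 + e1 + 2 * e3
      rcases mul_eq_zero.1 h' with h|h; exact absurd h h2
      rcases mul_eq_zero.1 h with h|h; exact absurd h h2
      rcases mul_eq_zero.1 h with h|h; exact absurd h h3; exact h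
    have hg2 : g 2 = 0 := by
      have h' : (5:F) * g 2 = 0 := by linear_combination 3 * hg0 - e3
      rcases mul_eq_zero.1 h' with h|h; exact absurd h h5; exact h
    have hg1 : g 1 = 0 := by
      have h' : (5:F) * g 1 = 0 := by linear_combination e2 + 2 * hg0
      rcases mul_eq_zero.1 h' with h|h; exact absurd h h5; exact h
    intro i; fin_cases i <;> assumption
  · apply Submodule.eq_top_iff'.2
    intro x
    have hx : x = ((5/12) * (x 0 + x 1 + 2 * x 3)) • (![3/5, 3/5, -(2/5), 3/5] : Fin 4 → F)
        + (x 2 + (1/6) * (x 0 + x 1 + 2 * x 3)) • (![0,0,1,0] : Fin 4 → F)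
        + ((1/4) * (x 0 + x 1 - 2 * x 3)) • (![1,1,0,-1] : Fin 4 → F)
        + ((1/2) * (x 0 - x 1)) • (![1,-1,0,0] : Fin 4 → F) := by
      funext i; fin_cases i <;>
        (simp [Matrix.vecHead, Matrix.vecTail]; try field_simp; try ring) <;>
        (try field_simp; try norm_num; try ring)
    rw [hx]
    refine Submodule.add_mem _ (Submodule.add_mem _ (Submodule.add_mem _
      (Submodule.smul_mem _ _ (Submodule.subset_span (by simp)))
      (Submodule.smul_mem _ _ (Submodule.subset_span (by simp))))
      (Submodule.smul_mem _ _ (Submodule.subset_span (by simp))))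
      (Submodule.smul_mem _ _ (Submodule.subset_span (by simp)))
  · refine ⟨tauQ2, ?_, ?_, ?_, ?_, ?_, ?_⟩
    · funext i; fin_cases i <;> simp [tauQ2]
    · funext i; fin_cases i <;> simp [tauQ2]
    · funext i; fin_cases i <;> simp [tauQ2]
    · funext i; fin_cases i <;> simp [tauQ2]
    · intro u v; funext i; fin_cases i <;> (simp [tauQ2, mulQ2, Matrix.vecHead, Matrix.vecTail]; try ring)
    · funext i; fin_cases i <;> simp [tauQ2]
end

section
/- Let F be a field of characteristic 5. In the algebra Q₂(1/3) over F, the element n := s₁ + s₂ + d₁ + d₂ annihilates the algebra: n·v = 0 for every v ∈ Q₂(1/3). In particular the line F·n is a nonzero proper ideal of Q₂(1/3), so Q₂(1/3) is not simple in characteristic 5. -/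
theorem Submodule.span_singleton_ne_top_of_one_lt_finrank {K V : Type*} [DivisionRing K]
    [AddCommGroup V] [Module K V] (hV : 1 < Module.finrank K V) (v : V) : K ∙ v ≠ ⊤ := by
  intro h
  have hle := finrank_span_le_card (R := K) ({v} : Set V)
  rw [h, finrank_top, Set.toFinset_singleton, Finset.card_singleton] at hle
  omega

section

variable {F : Type*} [Field F]

theorem mulQ2_comm (u v : Fin 4 → F) : mulQ2 u v = mulQ2 v u := by
  funext i
  fin_cases i <;> simp [mulQ2] <;> ring

theorem mulQ2_smul_left (c : F) (u v : Fin 4 → F) : mulQ2 (c • u) v = c • mulQ2 u v := by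
  funext i
  fin_cases i <;> simp [mulQ2] <;> ring

theorem mulQ2_eq_zero_of_mem_span {n u : Fin 4 → F} (hn : ∀ v, mulQ2 n v = 0)
    (hu : u ∈ Submodule.span F {n}) (v : Fin 4 → F) : mulQ2 v u = 0 := by
  obtain ⟨c, rfl⟩ := Submodule.mem_span_singleton.mp hu
  rw [mulQ2_comm, mulQ2_smul_left, hn, smul_zero]

theorem one_div_three_eq_two_of_five_eq_zero (h5 : (5 : F) = 0) : (1 / 3 : F) = 2 :=
  (eq_one_div_of_mul_eq_one_left (by linear_combination h5 : (2 : F) * 3 = 1)).symm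

theorem one_div_six_eq_one_of_five_eq_zero (h5 : (5 : F) = 0) : (1 / 6 : F) = 1 := by
  rw [show (6 : F) = 1 by linear_combination h5, div_one]

theorem mulQ2_ones_left_eq_zero (h5 : (5 : F) = 0) (v : Fin 4 → F) :
    mulQ2 ![1, 1, 1, 1] v = 0 := by
  funext i
  fin_cases i <;>
    simp only [mulQ2, Fin.isValue, Matrix.cons_val_zero, Matrix.cons_val_one, Matrix.cons_val,
      Fin.zero_eta, Fin.mk_one, Fin.reduceFinMk, Pi.zero_apply, one_mul,
      one_div_three_eq_two_of_five_eq_zero h5, one_div_six_eq_one_of_five_eq_zero h5]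
  · linear_combination v 0 * h5
  · linear_combination v 1 * h5
  · linear_combination v 2 * h5
  · linear_combination v 3 * h5

end

theorem Q2_char5_annihilator_general
    {F : Type*} [Field F]
    (h5 : (5 : F) = 0)
    (s₁ s₂ d₁ d₂ n : Fin 4 → F)
    (hs₁ : s₁ = ![1, 0, 0, 0]) (hs₂ : s₂ = ![0, 1, 0, 0])
    (hd₁ : d₁ = ![0, 0, 1, 0]) (hd₂ : d₂ = ![0, 0, 0, 1])
    (hn : n = s₁ + s₂ + d₁ + d₂) :
    (∀ v : Fin 4 → F, mulQ2 n v = 0) ∧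
    Submodule.span F {n} ≠ ⊥ ∧
    Submodule.span F {n} ≠ ⊤ ∧
    (∀ u ∈ Submodule.span F {n}, ∀ v : Fin 4 → F, mulQ2 v u ∈ Submodule.span F {n}) := by
  have hn_ones : n = ![1, 1, 1, 1] := by
    subst hs₁ hs₂ hd₁ hd₂ hn
    funext i
    fin_cases i <;> simp
  have hann : ∀ v, mulQ2 n v = 0 := hn_ones ▸ mulQ2_ones_left_eq_zero h5
  refine ⟨hann, ?_, ?_, fun u hu v => ?_⟩
  · rw [ne_eq, Submodule.span_singleton_eq_bot, hn_ones]
    exact fun h => one_ne_zero (congrFun h 0)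
  · exact Submodule.span_singleton_ne_top_of_one_lt_finrank (by simp) n
  · rw [mulQ2_eq_zero_of_mem_span hann hu v]
    exact Submodule.zero_mem _

/-- **`Q₂(1/3)` is not simple in characteristic 5.**
Let `F` be a field of characteristic 5.  In the algebra `Q₂(1/3)` over `F`, the element
`n := s₁ + s₂ + d₁ + d₂` annihilates the algebra: `n·v = 0` for every `v`.  In particular
the line `F·n` is a nonzero proper ideal of `Q₂(1/3)`, so `Q₂(1/3)` is not simple. -/
theorem Q2_char5_annihilator
    {F : Type*} [Field F]
    (h2 : (2 : F) ≠ 0) (h3 : (3 : F) ≠ 0) (h5 : (5 : F) = 0)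
    (s₁ s₂ d₁ d₂ n : Fin 4 → F)
    (hs₁ : s₁ = ![1, 0, 0, 0]) (hs₂ : s₂ = ![0, 1, 0, 0])
    (hd₁ : d₁ = ![0, 0, 1, 0]) (hd₂ : d₂ = ![0, 0, 0, 1])
    (hn : n = s₁ + s₂ + d₁ + d₂) :
    (∀ v : Fin 4 → F, mulQ2 n v = 0) ∧
    Submodule.span F {n} ≠ ⊥ ∧
    Submodule.span F {n} ≠ ⊤ ∧
    (∀ u ∈ Submodule.span F {n}, ∀ v : Fin 4 → F, mulQ2 v u ∈ Submodule.span F {n}) :=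
  Q2_char5_annihilator_general h5 s₁ s₂ d₁ d₂ n hs₁ hs₂ hd₁ hd₂ hn
end
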